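/- Fundamental Identity of Gabor Analysis: for every subgroup Λ of ZMod N × ZMod N and all f₁, g₁, f₂, g₂ ∈ ℂ^N, ∑_{λ ∈ Λ} V_{g₁}f₁(λ) · conj(V_{g₂}f₂(λ)) = (|Λ|/N) · ∑_{μ ∈ Λ°} V_{g₁}g₂(μ) · conj(V_{f₁}f₂(μ)), where |Λ| is the cardinality of Λ. -/

import Mathlib

/-! Expanding both short-time Fourier transforms and summing the characters over the frequency
variable shows that the symplectic Fourier transform of `V_{g₁}g₂ · conj (V_{f₁}f₂)` is
`N · V_{g₁}f₁ · conj (V_{g₂}f₂)`. Summing this over `λ ∈ Λ` and exchanging the sums leaves, for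
each `μ`, the sum of the character `λ ↦ 𝐞 (symplecticForm μ λ)` of `Λ`, which is `|Λ|` when
`μ ∈ Λ°` and vanishes otherwise. -/

open Complex Finset

/-- The time-frequency shift `π(k,r)` on `ℂ^N ≅ (ZMod N → ℂ)`:
`(π(k,r)f)(j) = e^{2πi·rj/N} · f(j−k)`. -/
noncomputable def tfShift (N : ℕ) (k r : ZMod N) : (ZMod N → ℂ) →ₗ[ℂ] (ZMod N → ℂ) where
  toFun f := fun j => Complex.exp (2 * Real.pi * Complex.I * (((r * j).val : ℂ) / (N : ℂ))) * f (j - k)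
  map_add' f g := by
    funext j
    simp [mul_add]
  map_smul' c f := by
    funext j
    simp [Pi.smul_apply, smul_eq_mul]
    ring

/-- The inner product `⟨f,g⟩ = ∑ⱼ f(j)·conj(g(j))`, linear in the first argument. -/
noncomputable def inn {N : ℕ} [NeZero N] (f g : ZMod N → ℂ) : ℂ :=
  ∑ j, f j * starRingEnd ℂ (g j)

/-- The short-time Fourier transform `V_g f(k,r) = ⟨f, π(k,r)g⟩`. -/
noncomputable def stft {N : ℕ} [NeZero N] (g f : ZMod N → ℂ) (k r : ZMod N) : ℂ :=
  inn f (tfShift N k r g)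

/-- The adjoint subgroup `Λ° = {(k,r) : l·r − k·s = 0 in ZMod N for all (l,s) ∈ Λ}`,
as a set. -/
def adjSet {N : ℕ} (Λ : AddSubgroup (ZMod N × ZMod N)) : Set (ZMod N × ZMod N) :=
  {p | ∀ q ∈ Λ, q.1 * p.2 - p.1 * q.2 = 0}

/-- The underlying finite set of a subgroup `Λ` of `ZMod N × ZMod N`. -/
noncomputable def subFinset {N : ℕ} [NeZero N] (Λ : AddSubgroup (ZMod N × ZMod N)) :
    Finset (ZMod N × ZMod N) :=
  Set.Finite.toFinset (Set.toFinite (Λ : Set (ZMod N × ZMod N)))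

/-- The underlying finite set of the adjoint subgroup `Λ°`. -/
noncomputable def adjFinset {N : ℕ} [NeZero N] (Λ : AddSubgroup (ZMod N × ZMod N)) :
    Finset (ZMod N × ZMod N) :=
  Set.Finite.toFinset (Set.toFinite (adjSet Λ))

/-- The rank-one operator `f ↦ ⟨f,h⟩·g`. -/
noncomputable def rankOne {N : ℕ} [NeZero N] (g h : ZMod N → ℂ) :
    (ZMod N → ℂ) →ₗ[ℂ] (ZMod N → ℂ) where
  toFun f := inn f h • g
  map_add' f f' := by
    simp [inn, add_mul, Finset.sum_add_distrib, add_smul]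
  map_smul' c f := by
    simp [inn, Finset.mul_sum, mul_assoc, mul_smul, smul_smul]

/-- The Gabor frame-type operator `S_{g,h,Λ} f = ∑_{λ∈Λ} ⟨f, π(λ)h⟩ · π(λ)g`. -/
noncomputable def gaborTypeOp (N : ℕ) [NeZero N] (Λ : AddSubgroup (ZMod N × ZMod N))
    (g h : ZMod N → ℂ) : (ZMod N → ℂ) →ₗ[ℂ] (ZMod N → ℂ) :=
  ∑ lam ∈ subFinset Λ, rankOne (tfShift N lam.1 lam.2 g) (tfShift N lam.1 lam.2 h)

open scoped ComplexConjugate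

def symplecticForm {R : Type*} [CommRing R] (p q : R × R) : R := p.1 * q.2 - q.1 * p.2

section Gabor

variable {N : ℕ} [NeZero N]

local notation "𝐞" => (ZMod.stdAddChar : AddChar (ZMod N) ℂ)

lemma sum_stdAddChar_mul (c : ZMod N) :
    ∑ s : ZMod N, 𝐞 (s * c) = if c = 0 then (N : ℂ) else 0 := by
  simpa using AddChar.sum_mulShift c (ZMod.isPrimitive_stdAddChar N)

lemma tfShift_apply (k r : ZMod N) (g : ZMod N → ℂ) (j : ZMod N) :
    tfShift N k r g j = 𝐞 (r * j) * g (j - k) := by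
  rw [ZMod.stdAddChar_apply, ZMod.toCircle_apply, mul_div_assoc]
  rfl

lemma stft_eq_sum (g f : ZMod N → ℂ) (l s : ZMod N) :
    stft g f l s = ∑ a, f a * conj (g (a - l)) * 𝐞 (-(s * a)) := by
  rw [stft, inn]
  refine sum_congr rfl fun a _ => ?_
  rw [tfShift_apply, map_mul, ← AddChar.map_neg_eq_conj]
  ring

lemma stft_mul_conj_stft (g f g' f' : ZMod N → ℂ) (l s : ZMod N) :
    stft g f l s * conj (stft g' f' l s)
      = ∑ a, ∑ t, f a * conj (g (a - l)) * conj (f' (a + t)) * g' (a + t - l) * 𝐞 (s * t) := by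
  rw [stft_eq_sum, stft_eq_sum, map_sum, sum_mul_sum]
  refine sum_congr rfl fun a _ => ?_
  rw [← Equiv.sum_comp (Equiv.addLeft a)]
  refine sum_congr rfl fun t _ => ?_
  have phase : 𝐞 (-(s * a)) * 𝐞 (s * (a + t)) = 𝐞 (s * t) := by
    rw [← AddChar.map_add_eq_mul]; ring_nf
  simp only [Equiv.coe_addLeft, map_mul, ← AddChar.map_neg_eq_conj, Complex.conj_conj, neg_neg]
  linear_combination f a * conj (g (a - l)) * conj (f' (a + t)) * g' (a + t - l) * phase

lemma sum_stft_mul_conj_stft_mul_stdAddChar (g f g' f' : ZMod N → ℂ) (l k : ZMod N) :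
    ∑ s, stft g f l s * conj (stft g' f' l s) * 𝐞 (-(k * s))
      = N * ∑ a, f a * conj (g (a - l)) * conj (f' (a + k)) * g' (a + k - l) := by
  simp_rw [stft_mul_conj_stft, sum_mul]
  rw [sum_comm, mul_sum]
  refine sum_congr rfl fun a _ => ?_
  rw [sum_comm]
  have orthogonality : ∀ t, ∑ s, 𝐞 (s * t) * 𝐞 (-(k * s)) = if t = k then (N : ℂ) else 0 := by
    intro t
    simp_rw [← AddChar.map_add_eq_mul, show ∀ s, s * t + -(k * s) = s * (t - k) from
      fun s => by ring, sum_stdAddChar_mul, sub_eq_zero]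
  simp_rw [mul_assoc, ← mul_sum, ← mul_assoc, orthogonality, mul_ite, mul_zero, sum_ite_eq',
    mem_univ, if_true]
  ring

lemma sum_stft_mul_conj_stft_mul_stdAddChar_symplecticForm (f₁ g₁ f₂ g₂ : ZMod N → ℂ)
    (q : ZMod N × ZMod N) :
    ∑ p, stft g₁ g₂ p.1 p.2 * conj (stft f₁ f₂ p.1 p.2) * 𝐞 (symplecticForm p q)
      = N * (stft g₁ f₁ q.1 q.2 * conj (stft g₂ f₂ q.1 q.2)) := by
  calc ∑ p, stft g₁ g₂ p.1 p.2 * conj (stft f₁ f₂ p.1 p.2) * 𝐞 (symplecticForm p q)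
      = ∑ l, 𝐞 (l * q.2) * ∑ s, stft g₁ g₂ l s * conj (stft f₁ f₂ l s) * 𝐞 (-(q.1 * s)) := by
        rw [Fintype.sum_prod_type]
        refine sum_congr rfl fun l _ => ?_
        rw [mul_sum]
        refine sum_congr rfl fun s _ => ?_
        rw [symplecticForm, sub_eq_add_neg, AddChar.map_add_eq_mul]
        ring
    _ = N * ∑ l, ∑ a,
          𝐞 (l * q.2) * g₂ a * conj (g₁ (a - l)) * conj (f₂ (a + q.1)) * f₁ (a + q.1 - l) := by
        simp_rw [sum_stft_mul_conj_stft_mul_stdAddChar, mul_sum]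
        refine sum_congr rfl fun l _ => sum_congr rfl fun a _ => ?_
        ring
    _ = N * ∑ l, ∑ a,
          f₁ a * conj (g₁ (a - q.1)) * conj (f₂ (a + l)) * g₂ (a + l - q.1) * 𝐞 (q.2 * l) := by
        congr 1
        refine sum_congr rfl fun l _ => ?_
        rw [← Equiv.sum_comp (Equiv.addRight (l - q.1))]
        refine sum_congr rfl fun a _ => ?_
        simp only [Equiv.coe_addRight]
        rw [show a + (l - q.1) - l = a - q.1 by ring, show a + (l - q.1) + q.1 = a + l by ring,
          add_sub_cancel_right, add_sub_assoc, mul_comm l]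
        ring
    _ = N * (stft g₁ f₁ q.1 q.2 * conj (stft g₂ f₂ q.1 q.2)) := by
        rw [stft_mul_conj_stft, sum_comm]

lemma sum_subFinset_stdAddChar_symplecticForm (Λ : AddSubgroup (ZMod N × ZMod N))
    (p : ZMod N × ZMod N) :
    ∑ q ∈ subFinset Λ, 𝐞 (symplecticForm p q)
      = if p ∈ adjFinset Λ then (#(subFinset Λ) : ℂ) else 0 := by
  classical
  let ψ : AddChar Λ ℂ := 𝐞.compAddMonoidHom <|
    AddMonoidHom.mk' (fun q : Λ => symplecticForm p q) fun a b => by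
      simp only [symplecticForm, AddSubgroup.coe_add, Prod.fst_add, Prod.snd_add]; ring
  have sum_eq : ∑ q ∈ subFinset Λ, 𝐞 (symplecticForm p q) = ∑ q : Λ, ψ q :=
    sum_subtype _ (fun q => Set.Finite.mem_toFinset _) _
  have card_eq : #(subFinset Λ) = Fintype.card Λ := Set.Finite.card_toFinset _
  have trivial_iff : ψ = 0 ↔ p ∈ adjFinset Λ := by
    have stdAddChar_eq_one (x : ZMod N) : 𝐞 x = 1 ↔ x = 0 := by
      rw [← AddChar.map_zero_eq_one 𝐞, ZMod.injective_stdAddChar.eq_iff]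
    rw [AddChar.eq_zero_iff, Subtype.forall, adjFinset, Set.Finite.mem_toFinset]
    refine forall₂_congr fun q _ => ?_
    rw [AddChar.compAddMonoidHom_apply, AddMonoidHom.mk'_apply, stdAddChar_eq_one, symplecticForm,
      ← neg_sub, neg_eq_zero]
  rw [sum_eq, AddChar.sum_eq_ite, card_eq]
  exact if_congr trivial_iff rfl rfl

end Gabor

/-- **Fundamental Identity of Gabor Analysis**: for every subgroup `Λ` of `ZMod N × ZMod N`
and all `f₁, g₁, f₂, g₂ ∈ ℂ^N`,
`∑_{λ∈Λ} V_{g₁}f₁(λ) · conj(V_{g₂}f₂(λ)) = (|Λ|/N) · ∑_{μ∈Λ°} V_{g₁}g₂(μ) · conj(V_{f₁}f₂(μ))`. -/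
theorem fundamental_identity_of_gabor_analysis (N : ℕ) [NeZero N]
    (Λ : AddSubgroup (ZMod N × ZMod N)) (f₁ g₁ f₂ g₂ : ZMod N → ℂ) :
    ∑ lam ∈ subFinset Λ, stft g₁ f₁ lam.1 lam.2 * starRingEnd ℂ (stft g₂ f₂ lam.1 lam.2)
      = ((subFinset Λ).card : ℂ) / (N : ℂ) *
          ∑ mu ∈ adjFinset Λ, stft g₁ g₂ mu.1 mu.2 * starRingEnd ℂ (stft f₁ f₂ mu.1 mu.2) := by
  set F : ZMod N × ZMod N → ℂ := fun p => stft g₁ g₂ p.1 p.2 * conj (stft f₁ f₂ p.1 p.2)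
  have hN : (N : ℂ) ≠ 0 := Nat.cast_ne_zero.mpr (NeZero.ne N)
  rw [div_mul_eq_mul_div, eq_div_iff hN, mul_comm, mul_sum]
  calc ∑ lam ∈ subFinset Λ, N * (stft g₁ f₁ lam.1 lam.2 * conj (stft g₂ f₂ lam.1 lam.2))
      = ∑ lam ∈ subFinset Λ, ∑ p, F p * ZMod.stdAddChar (symplecticForm p lam) := by
        simp_rw [F, sum_stft_mul_conj_stft_mul_stdAddChar_symplecticForm]
    _ = ∑ p, if p ∈ adjFinset Λ then #(subFinset Λ) * F p else 0 := by
        rw [sum_comm]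
        simp_rw [← mul_sum, sum_subFinset_stdAddChar_symplecticForm, mul_ite, mul_zero, mul_comm]
    _ = #(subFinset Λ) * ∑ mu ∈ adjFinset Λ, F mu := by
        rw [sum_ite_mem, univ_inter, mul_sum]
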